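/- arXiv:2301.07243 — 7 statements merged into one kernel-verified Lean document; each statement's English description precedes it below -/
import Mathlib

section
/- Let α ∈ (0,1), Δ > 0 and let n be a real number with 0 < n. Then the function f(x) = (1−α)·Δ·x + (1−α)^x·Δ·(n−x) is strictly convex on the interval [0, n]; equivalently, its second derivative f''(x) = −(1−α)^x·Δ·(2 − (n−x)·log(1−α))·log(1−α) is strictly positive for every x ∈ [0, n]. -/
/-- For `α ∈ (0,1)`, `Δ > 0`, `n > 0`, the function
`f(x) = (1−α)·Δ·x + (1−α)^x·Δ·(n−x)` (with `(1−α)^x = exp(x·log(1−α))`)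
is strictly convex on `[0, n]`; equivalently, its second derivative
`f''(x) = −(1−α)^x·Δ·(2 − (n−x)·log(1−α))·log(1−α)` is strictly positive on `[0, n]`. -/
theorem stmt0 (α Δ n : ℝ) (hα : α ∈ Set.Ioo (0:ℝ) 1) (hΔ : 0 < Δ) (hn : 0 < n) :
    StrictConvexOn ℝ (Set.Icc 0 n)
      (fun x => (1 - α) * Δ * x + Real.exp (x * Real.log (1 - α)) * Δ * (n - x)) ∧
    ∀ x ∈ Set.Icc (0:ℝ) n,
      0 < -(Real.exp (x * Real.log (1 - α)) * Δ *
        (2 - (n - x) * Real.log (1 - α)) * Real.log (1 - α)) := by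
  obtain ⟨hα0, hα1⟩ := hα
  set L := Real.log (1 - α) with hLdef
  have h1α : (0:ℝ) < 1 - α := by linarith
  have hL : L < 0 := Real.log_neg h1α (by linarith)
  set f : ℝ → ℝ := fun x => (1 - α) * Δ * x + Real.exp (x * L) * Δ * (n - x) with hf
  set g : ℝ → ℝ := fun x => (1 - α) * Δ + Real.exp (x * L) * Δ * (L * (n - x) - 1) with hg
  have hE : ∀ x : ℝ, HasDerivAt (fun x : ℝ => Real.exp (x * L)) (Real.exp (x * L) * L) x := by
    intro x
    simpa using ((hasDerivAt_id x).mul_const L).exp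
  have hd1 : ∀ x : ℝ, HasDerivAt f (g x) x := by
    intro x
    have h1 : HasDerivAt (fun x : ℝ => (1 - α) * Δ * x) ((1 - α) * Δ) x := by
      simpa using (hasDerivAt_id x).const_mul ((1 - α) * Δ)
    have h2 : HasDerivAt (fun x : ℝ => Real.exp (x * L) * Δ * (n - x))
        (Real.exp (x * L) * L * Δ * (n - x) + Real.exp (x * L) * Δ * (0 - 1)) x :=
      ((hE x).mul_const Δ).mul ((hasDerivAt_const x n).sub (hasDerivAt_id x))
    have h3 := h1.add h2
    exact h3.congr_deriv (by simp only [hg]; ring)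
  have hd2 : ∀ x : ℝ, HasDerivAt g
      (-(Real.exp (x * L) * Δ * (2 - (n - x) * L) * L)) x := by
    intro x
    have h2 : HasDerivAt (fun x : ℝ => Real.exp (x * L) * Δ * (L * (n - x) - 1))
        (Real.exp (x * L) * L * Δ * (L * (n - x) - 1) +
          Real.exp (x * L) * Δ * (0 * (n - x) + L * (0 - 1) - 0)) x :=
      ((hE x).mul_const Δ).mul (((hasDerivAt_const x L).mul
        ((hasDerivAt_const x n).sub (hasDerivAt_id x))).sub (hasDerivAt_const x 1))
    have h3 := (hasDerivAt_const x ((1 - α) * Δ)).add h2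
    exact h3.congr_deriv (by ring)
  have hderiv : deriv f = g := funext fun x => (hd1 x).deriv
  have hpos : ∀ x ∈ Set.Icc (0:ℝ) n,
      0 < -(Real.exp (x * L) * Δ * (2 - (n - x) * L) * L) := by
    intro x hx
    have hnx : 0 ≤ n - x := by linarith [hx.2]
    have h2 : 0 < 2 - (n - x) * L := by nlinarith
    have hEpos : 0 < Real.exp (x * L) := Real.exp_pos _
    have h4 := mul_neg_of_pos_of_neg (mul_pos (mul_pos hEpos hΔ) h2) hL
    nlinarith [h4]
  refine ⟨?_, hpos⟩
  apply strictConvexOn_of_deriv2_pos (convex_Icc 0 n)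
  · exact Continuous.continuousOn (by fun_prop)
  · intro x hx
    rw [interior_Icc] at hx
    have hx' : x ∈ Set.Icc (0:ℝ) n := Set.mem_Icc.2 ⟨hx.1.le, hx.2.le⟩
    show 0 < deriv (deriv f) x
    have heq : deriv (deriv f) x = -(Real.exp (x * L) * Δ * (2 - (n - x) * L) * L) := by
      rw [hderiv]; exact (hd2 x).deriv
    rw [heq]
    exact hpos x hx'
end

section
/- Let α ∈ (0,1), let n > 0 be real, and write L = log(1/(1−α)) > 0. If x* ∈ (0, n) satisfies the stationarity equation (1/(1−α))^{x*−1} − 1 = (n − x*)·L, then x* > (log n + log L − log 2)/L. -/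
/-- For `α ∈ (0,1)`, `n > 0` and `L = log(1/(1−α))`: if `x* ∈ (0,n)` satisfies the
stationarity equation `(1/(1−α))^{x*−1} − 1 = (n − x*)·L`, then
`x* > (log n + log L − log 2)/L`. -/
theorem stmt2 (α n x : ℝ) (hα : α ∈ Set.Ioo (0:ℝ) 1) (hn : 0 < n)
    (hx : x ∈ Set.Ioo 0 n)
    (hstat : Real.exp ((x - 1) * Real.log (1 / (1 - α))) - 1
      = (n - x) * Real.log (1 / (1 - α))) :
    x > (Real.log n + Real.log (Real.log (1 / (1 - α))) - Real.log 2) /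
      Real.log (1 / (1 - α)) := by
  obtain ⟨hα0, hα1⟩ := hα
  obtain ⟨hx0, hxn⟩ := hx
  set L := Real.log (1 / (1 - α)) with hLdef
  have h1α : 0 < 1 - α := by linarith
  have hgt1 : 1 < 1 / (1 - α) := by
    rw [lt_div_iff₀ h1α]; linarith
  have hL : 0 < L := Real.log_pos hgt1
  have hstat' : Real.exp ((x - 1) * L) = 1 + (n - x) * L := by linarith
  have hkey : n * L / 2 < Real.exp (x * L) := by
    have hsplit : Real.exp (x * L) = Real.exp L * Real.exp ((x - 1) * L) := by
      rw [← Real.exp_add]; ring_nf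
    rcases le_or_gt x (n / 2) with h | h
    · have h1 : (1 : ℝ) < Real.exp L := by
        rw [Real.one_lt_exp_iff]; exact hL
      have h2 : n * L / 2 ≤ (n - x) * L := by nlinarith
      calc n * L / 2 ≤ (n - x) * L := h2
        _ < 1 + (n - x) * L := by linarith
        _ = 1 * Real.exp ((x - 1) * L) := by rw [hstat']; ring
        _ < Real.exp L * Real.exp ((x - 1) * L) := by
            apply mul_lt_mul_of_pos_right h1 (Real.exp_pos _)
        _ = Real.exp (x * L) := hsplit.symm
    · have h3 : x * L < Real.exp (x * L) := by
        have := Real.add_one_lt_exp (x := x * L) (by positivity)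
        linarith
      nlinarith
  have hnL2 : 0 < n * L / 2 := by positivity
  rw [gt_iff_lt, div_lt_iff₀ hL]
  have hlog : Real.log n + Real.log L - Real.log 2 = Real.log (n * L / 2) := by
    rw [Real.log_div (by positivity) (by norm_num), Real.log_mul (ne_of_gt hn) (ne_of_gt hL)]
  rw [hlog]
  exact (Real.log_lt_iff_lt_exp hnL2).mpr hkey
end

section
/- Let α ∈ (0,1), Δ > 0 and let n ≥ 2 be an integer. Then for every x ∈ [0, n], (1−α)·Δ·x + (1−α)^x·Δ·(n−x) > (1−α)·Δ·(log n + log(log(1/(1−α))) − log 2)/log(1/(1−α)). -/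
/-- For `α ∈ (0,1)`, `Δ > 0` and an integer `n ≥ 2`, for every `x ∈ [0,n]`:
`(1−α)·Δ·x + (1−α)^x·Δ·(n−x) > (1−α)·Δ·(log n + log(log(1/(1−α))) − log 2)/log(1/(1−α))`. -/
theorem stmt3 (α Δ : ℝ) (n : ℕ) (hα : α ∈ Set.Ioo (0:ℝ) 1) (hΔ : 0 < Δ) (hn : 2 ≤ n) :
    ∀ x ∈ Set.Icc (0:ℝ) (n:ℝ),
      (1 - α) * Δ * x + Real.exp (x * Real.log (1 - α)) * Δ * ((n:ℝ) - x) >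
      (1 - α) * Δ *
        (Real.log n + Real.log (Real.log (1 / (1 - α))) - Real.log 2) /
        Real.log (1 / (1 - α)) := by
  obtain ⟨hα0, hα1⟩ := hα
  intro x hx
  obtain ⟨hx0, hxn⟩ := hx
  have hβ0 : (0:ℝ) < 1 - α := by linarith
  have hβ1 : (1:ℝ) - α < 1 := by linarith
  have hL : 0 < Real.log (1 / (1 - α)) := by
    apply Real.log_pos
    rw [one_lt_div hβ0]; exact hβ1
  set L := Real.log (1 / (1 - α)) with hLdef
  have hLβ : L = -Real.log (1 - α) := by
    rw [hLdef, one_div, Real.log_inv]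
  have hn0 : (0:ℝ) < n := by
    have : (2:ℝ) ≤ n := by exact_mod_cast hn
    linarith
  set c := (Real.log n + Real.log L - Real.log 2) / L with hc
  have hcL : c * L = Real.log (n * L / 2) := by
    rw [hc, div_mul_cancel₀ _ (ne_of_gt hL), Real.log_div (by positivity) two_ne_zero,
      Real.log_mul (ne_of_gt hn0) (ne_of_gt hL)]
  have hcn : c < n / 2 := by
    have h1 : Real.log (n * L / 2) ≤ n * L / 2 - 1 :=
      Real.log_le_sub_one_of_pos (by positivity)
    have h2 : c * L < (n / 2) * L := by rw [hcL]; nlinarith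
    exact lt_of_mul_lt_mul_right h2 (le_of_lt hL)
  set E := Real.exp (x * Real.log (1 - α)) with hE
  have hE0 : 0 < E := Real.exp_pos _
  have hRHS : (1 - α) * Δ * (Real.log n + Real.log L - Real.log 2) / L
      = (1 - α) * Δ * c := by rw [hc]; ring
  rw [hRHS]
  rcases le_or_gt x c with hxc | hxc
  · -- hard case: x ≤ c
    have hnx : (n:ℝ) / 2 < (n:ℝ) - x := by linarith
    have hlogE : Real.log E = -(L * x) := by
      rw [hE, Real.log_exp, hLβ]; ring
    have hkey : L * (c - x) ≤ (n:ℝ) * L / 2 * E - 1 := by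
      have h1 : Real.log ((n:ℝ) * L / 2 * E) ≤ (n:ℝ) * L / 2 * E - 1 :=
        Real.log_le_sub_one_of_pos (by positivity)
      have h2 : Real.log ((n:ℝ) * L / 2 * E) = L * (c - x) := by
        rw [Real.log_mul (by positivity) (ne_of_gt hE0), hlogE, ← hcL]; ring
      linarith [h2 ▸ h1]
    have h3 : L * (E * ((n:ℝ) - x)) > L * (c - x) := by
      have h3' := mul_lt_mul_of_pos_left hnx (mul_pos hL hE0)
      nlinarith [h3', hkey]
    have h4 : E * ((n:ℝ) - x) > c - x := by
      have := (mul_lt_mul_iff_right₀ hL).mp h3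
      linarith
    have h5 := mul_lt_mul_of_pos_left h4 hΔ
    have h6 : 0 ≤ α * Δ * (c - x) :=
      mul_nonneg (mul_nonneg hα0.le hΔ.le) (sub_nonneg.mpr hxc)
    nlinarith [h5, h6]
  · -- easy case: x > c
    have h5 := mul_lt_mul_of_pos_left hxc (mul_pos hβ0 hΔ)
    nlinarith [h5, mul_nonneg (mul_pos hE0 hΔ).le (sub_nonneg.mpr hxn)]
end

section
/- Let α ∈ (0,1), Δ > 0 and let n > 1 be a real number. Then the function f(x) = (1−α)·Δ·x + (1−α)^x·Δ·(n−x) has a unique stationary point x* in the open interval (0, n) (i.e., a unique x* ∈ (0,n) with f'(x*) = 0), and f attains its minimum over [0, n] uniquely at x*: f(x) > f(x*) for every x ∈ [0, n] with x ≠ x*. -/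
/-- For `α ∈ (0,1)`, `Δ > 0` and real `n > 1`, the function
`f(x) = (1−α)·Δ·x + (1−α)^x·Δ·(n−x)` has a unique stationary point `x*` in `(0,n)`,
and `f` attains its minimum over `[0,n]` uniquely at `x*`. -/
theorem stmt4 (α Δ n : ℝ) (hα : α ∈ Set.Ioo (0:ℝ) 1) (hΔ : 0 < Δ) (hn : 1 < n)
    (f : ℝ → ℝ)
    (hf : f = fun x => (1 - α) * Δ * x + Real.exp (x * Real.log (1 - α)) * Δ * (n - x)) :
    (∃! xs : ℝ, xs ∈ Set.Ioo (0:ℝ) n ∧ deriv f xs = 0) ∧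
    ∀ xs ∈ Set.Ioo (0:ℝ) n, deriv f xs = 0 →
      ∀ x ∈ Set.Icc (0:ℝ) n, x ≠ xs → f x > f xs := by
  obtain ⟨hα0, hα1⟩ := hα
  have hβ0 : (0:ℝ) < 1 - α := by linarith
  have hβ1 : 1 - α < 1 := by linarith
  set L : ℝ := Real.log (1 - α) with hLdef
  have hL : L < 0 := Real.log_neg hβ0 hβ1
  have hn0 : (0:ℝ) < n := by linarith
  set g : ℝ → ℝ := fun x => (1 - α) * Δ + Real.exp (x * L) * (Δ * (L * (n - x) - 1)) with hg
  -- derivative of f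
  have hderiv : ∀ x : ℝ, HasDerivAt f (g x) x := by
    intro x
    rw [hf]
    have h1 : HasDerivAt (fun x : ℝ => x * L) L x := by
      simpa using (hasDerivAt_id x).mul_const L
    have hE : HasDerivAt (fun x : ℝ => Real.exp (x * L)) (Real.exp (x * L) * L) x := h1.exp
    have hnx : HasDerivAt (fun x : ℝ => n - x) (-1) x := (hasDerivAt_id x).const_sub n
    have hlin : HasDerivAt (fun x : ℝ => (1 - α) * Δ * x) ((1 - α) * Δ) x := by
      simpa using (hasDerivAt_id x).const_mul ((1 - α) * Δ)
    have hprod := ((hE.mul_const Δ).mul hnx)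
    have := hlin.add hprod
    refine this.congr_deriv ?_
    simp only [hg]
    ring
  have hdf : deriv f = g := funext fun x => (hderiv x).deriv
  -- derivative of g
  have hgderiv : ∀ x : ℝ, HasDerivAt g (Real.exp (x * L) * Δ * L * (L * (n - x) - 2)) x := by
    intro x
    have h1 : HasDerivAt (fun x : ℝ => x * L) L x := by
      simpa using (hasDerivAt_id x).mul_const L
    have hE : HasDerivAt (fun x : ℝ => Real.exp (x * L)) (Real.exp (x * L) * L) x := h1.exp
    have hh : HasDerivAt (fun x : ℝ => Δ * (L * (n - x) - 1)) (Δ * (-L)) x := by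
      have : HasDerivAt (fun x : ℝ => L * (n - x) - 1) (L * (-1)) x :=
        (((hasDerivAt_id x).const_sub n).const_mul L).sub_const 1
      simpa using this.const_mul Δ
    have := (hE.mul hh).const_add ((1 - α) * Δ)
    refine this.congr_deriv ?_
    ring
  have hgcont : Continuous g := by fun_prop
  -- g is strictly increasing on [0, n]
  have hmono : StrictMonoOn g (Set.Icc 0 n) := by
    apply strictMonoOn_of_deriv_pos (convex_Icc 0 n) hgcont.continuousOn
    intro x hx
    rw [interior_Icc] at hx
    rw [(hgderiv x).deriv]
    have h1 : L * (n - x) < 0 := mul_neg_of_neg_of_pos hL (by linarith [hx.2])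
    have h2 : Real.exp (x * L) * Δ * L < 0 :=
      mul_neg_of_pos_of_neg (mul_pos (Real.exp_pos _) hΔ) hL
    exact mul_pos_of_neg_of_neg h2 (by linarith)
  -- sign at endpoints
  have hg0 : g 0 < 0 := by
    have hLn : L * n < 0 := mul_neg_of_neg_of_pos hL hn0
    simp only [hg, zero_mul, Real.exp_zero, sub_zero, one_mul]
    nlinarith [mul_pos hΔ hα0]
  have hgn : (0:ℝ) < g n := by
    have h1 : n * L < L := by nlinarith
    have h2 : Real.exp (n * L) < 1 - α := by
      calc Real.exp (n * L) < Real.exp L := Real.exp_lt_exp.mpr h1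
        _ = 1 - α := Real.exp_log hβ0
    simp only [hg, sub_self, mul_zero, zero_sub]
    nlinarith [Real.exp_pos (n * L)]
  -- existence of stationary point
  have hsub : Set.Ioo (g 0) (g n) ⊆ g '' Set.Ioo 0 n :=
    intermediate_value_Ioo (le_of_lt hn0) hgcont.continuousOn
  obtain ⟨xs, hxs, hgxs⟩ := hsub ⟨hg0, hgn⟩
  have hIooIcc : Set.Ioo (0:ℝ) n ⊆ Set.Icc 0 n := Set.Ioo_subset_Icc_self
  constructor
  · refine ⟨xs, ⟨hxs, by rw [hdf]; exact hgxs⟩, ?_⟩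
    rintro y ⟨hy, hdy⟩
    rw [hdf] at hdy
    exact hmono.injOn (hIooIcc hy) (hIooIcc hxs) (by rw [hdy, hgxs])
  · rintro z hz hdz x hx hne
    rw [hdf] at hdz
    have hfc : Continuous f := by rw [hf]; fun_prop
    rcases lt_or_gt_of_ne hne with hlt | hgt
    · -- x < z
      obtain ⟨c, hc, hslope⟩ := exists_hasDerivAt_eq_slope f g hlt hfc.continuousOn
        (fun y _ => hderiv y)
      have hgc : g c < 0 := by
        have := hmono ⟨by linarith [hx.1, hc.1], by linarith [hz.2, hc.2]⟩ (hIooIcc hz) hc.2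
        linarith [hdz ▸ this]
      rw [eq_div_iff (by linarith : z - x ≠ 0)] at hslope
      nlinarith [mul_neg_of_neg_of_pos hgc (by linarith : (0:ℝ) < z - x)]
    · -- z < x
      obtain ⟨c, hc, hslope⟩ := exists_hasDerivAt_eq_slope f g hgt hfc.continuousOn
        (fun y _ => hderiv y)
      have hgc : 0 < g c := by
        have := hmono (hIooIcc hz) ⟨by linarith [hz.1, hc.1], by linarith [hx.2, hc.2]⟩ hc.1
        linarith [hdz ▸ this]
      rw [eq_div_iff (by linarith : x - z ≠ 0)] at hslope
      nlinarith [mul_pos hgc (by linarith : (0:ℝ) < x - z)]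
end

section
/- Let K ≥ 1 be a natural number and let α : {1,…,K} → ℝ satisfy α_j ≥ 0 for all j and ∑_{j=1}^K α_j = 1. Then ∫_0^∞ (1 − ∏_{j=1}^K (1 − exp(−α_j·y))) dy ≥ K·log K. (This is the coupon-collector estimate E N ≥ K log K underlying the paper's Theorem 4 on regret scaling with K.) -/
open scoped ENNReal
open MeasureTheory Filter Real Set

private lemma geom_id (u : ℝ) (K : ℕ) :
    ∑ i ∈ Finset.range K, u * (1 - u) ^ i = 1 - (1 - u) ^ K := by
  induction K with
  | zero => simp
  | succ n ih => rw [Finset.sum_range_succ, ih]; ring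

private lemma integral_aux (c : ℝ) (hc : 0 < c) (i : ℕ) :
    ∫⁻ y in Set.Ioi (0:ℝ),
      ENNReal.ofReal (Real.exp (-(c*y)) * (1 - Real.exp (-(c*y))) ^ i)
      = ENNReal.ofReal (c⁻¹ / (i+1)) := by
  set g : ℝ → ℝ := fun y => Real.exp (-(c*y)) * (1 - Real.exp (-(c*y))) ^ i with hg
  have hgnn : ∀ y ∈ Set.Ioi (0:ℝ), 0 ≤ g y := by
    intro y hy
    have h1 : Real.exp (-(c*y)) ≤ 1 := by
      rw [Real.exp_le_one_iff]
      nlinarith [hy.out]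
    exact mul_nonneg (Real.exp_pos _).le (pow_nonneg (by linarith) _)
  have hgcont : Continuous g := by fun_prop
  have hint : IntegrableOn g (Set.Ioi (0:ℝ)) := by
    refine MeasureTheory.Integrable.mono (exp_neg_integrableOn_Ioi 0 hc)
      (hgcont.aestronglyMeasurable.restrict) ?_
    refine ae_restrict_of_forall_mem measurableSet_Ioi fun y hy => ?_
    have h0 : 0 < Real.exp (-(c*y)) := Real.exp_pos _
    have h1 : Real.exp (-(c*y)) ≤ 1 := by
      rw [Real.exp_le_one_iff]; nlinarith [hy.out]
    have hpow : (1 - Real.exp (-(c*y))) ^ i ≤ 1 :=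
      pow_le_one₀ (by linarith) (by linarith)
    rw [Real.norm_eq_abs, Real.norm_eq_abs, abs_of_nonneg (hgnn y hy),
      abs_of_nonneg (Real.exp_pos _).le]
    calc g y ≤ Real.exp (-(c*y)) * 1 := by
          exact mul_le_mul_of_nonneg_left hpow h0.le
      _ = Real.exp (-c * y) := by ring_nf
  -- compute the real integral
  have hF : ∀ x : ℝ, HasDerivAt (fun y => (c⁻¹/(i+1)) * (1 - Real.exp (-(c*y))) ^ (i+1))
      (g x) x := by
    intro x
    have h1 : HasDerivAt (fun y : ℝ => -(c*y)) (-c) x := by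
      simpa [Pi.neg_def] using ((hasDerivAt_id x).const_mul c).neg
    have h2 := h1.exp
    have h3 := (h2.const_sub 1).pow (i+1)
    have h4 : HasDerivAt (fun y => (c⁻¹/(i+1)) * (1 - Real.exp (-(c*y))) ^ (i+1)) _ x :=
      h3.const_mul (c⁻¹/(i+1))
    convert h4 using 1
    have hc' : c ≠ 0 := hc.ne'
    have hi : ((i:ℝ)+1) ≠ 0 := by positivity
    simp only [Nat.add_sub_cancel, Nat.cast_add, Nat.cast_one]
    field_simp [hg]
    ring
  have htend : Tendsto (fun y => (c⁻¹/(i+1)) * (1 - Real.exp (-(c*y))) ^ (i+1))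
      atTop (nhds (c⁻¹/(i+1))) := by
    have h1 : Tendsto (fun y : ℝ => -(c*y)) atTop atBot := by
      exact tendsto_neg_atTop_atBot.comp (tendsto_id.const_mul_atTop hc)
    have h2 : Tendsto (fun y : ℝ => Real.exp (-(c*y))) atTop (nhds 0) :=
      Real.tendsto_exp_atBot.comp h1
    have h3 := (((tendsto_const_nhds (x := (1:ℝ))).sub h2).pow (i+1)).const_mul (c⁻¹/(i+1))
    simpa using h3
  have hreal : ∫ y in Set.Ioi (0:ℝ), g y = c⁻¹/(i+1) := by
    rw [MeasureTheory.integral_Ioi_of_hasDerivAt_of_tendsto'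
      (fun x _ => hF x) hint htend]
    simp
  rw [← MeasureTheory.ofReal_integral_eq_lintegral_ofReal hint
      (ae_restrict_of_forall_mem measurableSet_Ioi hgnn), hreal]

private lemma prod_bound (K : ℕ) (hK : 1 ≤ K) (α : Fin K → ℝ)
    (hα : ∀ j, 0 ≤ α j) (hsum : ∑ j, α j = 1) (y : ℝ) (hy : 0 ≤ y) :
    ∏ j, (1 - Real.exp (-(α j) * y)) ≤ (1 - Real.exp (-((K:ℝ)⁻¹ * y))) ^ K := by
  have hK0 : (0:ℝ) < K := by exact_mod_cast hK
  have hKne : (K:ℝ) ≠ 0 := hK0.ne'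
  set w : ℝ := (K:ℝ)⁻¹ with hw
  have hw0 : 0 ≤ w := by positivity
  have hw' : ∑ _j : Fin K, w = 1 := by
    simp [Finset.sum_const, Finset.card_univ, hw]
    field_simp
  have hexple : ∀ j : Fin K, Real.exp (-(α j) * y) ≤ 1 := by
    intro j
    rw [Real.exp_le_one_iff]
    have := hα j
    nlinarith
  have hznn : ∀ j : Fin K, (0:ℝ) ≤ 1 - Real.exp (-(α j) * y) := by
    intro j; linarith [hexple j]
  -- AM-GM on exp terms
  have hb : Real.exp (-(w * y)) ≤ ∑ j, w * Real.exp (-(α j) * y) := by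
    have := Real.geom_mean_le_arith_mean_weighted Finset.univ (fun _ => w)
      (fun j => Real.exp (-(α j) * y)) (fun _ _ => hw0) hw'
      (fun j _ => (Real.exp_pos _).le)
    calc Real.exp (-(w * y)) = ∏ j : Fin K, Real.exp (-(α j) * y) ^ w := by
          rw [Finset.prod_congr rfl (fun j _ => (Real.exp_mul _ _).symm),
            ← Real.exp_sum, ← Finset.sum_mul, ← Finset.sum_mul,
            Finset.sum_neg_distrib, hsum]
          congr 1
          ring
      _ ≤ _ := this
  -- AM-GM on the product
  have ha := Real.geom_mean_le_arith_mean_weighted Finset.univ (fun _ => w)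
    (fun j => 1 - Real.exp (-(α j) * y)) (fun _ _ => hw0) hw'
    (fun j _ => hznn j)
  have hsum2 : ∑ j : Fin K, w * (1 - Real.exp (-(α j) * y))
      ≤ 1 - Real.exp (-(w * y)) := by
    have : ∑ j : Fin K, w * (1 - Real.exp (-(α j) * y))
        = 1 - ∑ j, w * Real.exp (-(α j) * y) := by
      simp only [mul_sub, Finset.sum_sub_distrib, mul_one]
      rw [hw']
    rw [this]
    linarith [hb]
  have hprodnn : (0:ℝ) ≤ ∏ j, (1 - Real.exp (-(α j) * y)) :=
    Finset.prod_nonneg fun j _ => hznn j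
  have hA : (0:ℝ) ≤ 1 - Real.exp (-(w * y)) := by
    have : Real.exp (-(w * y)) ≤ 1 := by
      rw [Real.exp_le_one_iff]; nlinarith
    linarith
  have key : (∏ j, (1 - Real.exp (-(α j) * y))) ^ w ≤ 1 - Real.exp (-(w * y)) := by
    rw [← Real.finset_prod_rpow Finset.univ _ (fun j _ => hznn j)]
    exact le_trans ha hsum2
  have hKne' : K ≠ 0 := by omega
  calc ∏ j, (1 - Real.exp (-(α j) * y))
      = ((∏ j, (1 - Real.exp (-(α j) * y))) ^ w) ^ K := by
        rw [hw, Real.rpow_inv_natCast_pow hprodnn hKne']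
    _ ≤ (1 - Real.exp (-(w * y))) ^ K :=
        pow_le_pow_left₀ (Real.rpow_nonneg hprodnn _) key K
    _ = (1 - Real.exp (-((K:ℝ)⁻¹ * y))) ^ K := by rw [hw]

/-- Coupon-collector estimate: for a probability vector `α` on `K ≥ 1` types,
`∫_0^∞ (1 − ∏_j (1 − exp(−α_j·y))) dy ≥ K·log K`. -/
theorem stmt5 (K : ℕ) (hK : 1 ≤ K) (α : Fin K → ℝ)
    (hα : ∀ j, 0 ≤ α j) (hsum : ∑ j, α j = 1) :
    ENNReal.ofReal ((K : ℝ) * Real.log K) ≤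
      ∫⁻ y in Set.Ioi (0:ℝ),
        ENNReal.ofReal (1 - ∏ j, (1 - Real.exp (-(α j) * y))) := by
  have hK0 : (0:ℝ) < K := by exact_mod_cast hK
  have hKne : (K:ℝ) ≠ 0 := hK0.ne'
  set c : ℝ := (K:ℝ)⁻¹ with hc
  have hc0 : 0 < c := by positivity
  set g : ℕ → ℝ → ℝ := fun i y => Real.exp (-(c*y)) * (1 - Real.exp (-(c*y))) ^ i with hg
  have hmeas : ∀ i : ℕ, Measurable fun y => ENNReal.ofReal (g i y) := by
    intro i
    exact (Continuous.measurable (by fun_prop)).ennreal_ofReal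
  calc ENNReal.ofReal ((K : ℝ) * Real.log K)
      ≤ ∑ i ∈ Finset.range K, ENNReal.ofReal ((K:ℝ) / (i+1)) := by
        rw [← ENNReal.ofReal_sum_of_nonneg (fun i _ => by positivity)]
        apply ENNReal.ofReal_le_ofReal
        have h1 : Real.log K ≤ Real.log (K+1) := by
          apply Real.log_le_log hK0; linarith
        have h2 : Real.log ((K:ℝ)+1) ≤ ∑ i ∈ Finset.range K, ((i:ℝ)+1)⁻¹ := by
          have := log_add_one_le_harmonic K
          rw [harmonic] at this
          push_cast at this
          convert this using 2
        calc (K:ℝ) * Real.log K ≤ (K:ℝ) * ∑ i ∈ Finset.range K, ((i:ℝ)+1)⁻¹ := by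
              apply mul_le_mul_of_nonneg_left _ hK0.le
              linarith
          _ = ∑ i ∈ Finset.range K, (K:ℝ) / (i+1) := by
              rw [Finset.mul_sum]
              exact Finset.sum_congr rfl fun i _ => by rw [div_eq_mul_inv]
    _ = ∑ i ∈ Finset.range K, ∫⁻ y in Set.Ioi (0:ℝ), ENNReal.ofReal (g i y) := by
        refine Finset.sum_congr rfl fun i _ => ?_
        rw [integral_aux c hc0 i, hc, inv_inv]
    _ = ∫⁻ y in Set.Ioi (0:ℝ), ∑ i ∈ Finset.range K, ENNReal.ofReal (g i y) := by
        rw [MeasureTheory.lintegral_finset_sum _ (fun i _ => hmeas i)]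
    _ ≤ _ := by
        apply MeasureTheory.lintegral_mono_ae
        refine ae_restrict_of_forall_mem measurableSet_Ioi fun y hy => ?_
        have hy0 : 0 ≤ y := hy.out.le
        have h1 : Real.exp (-(c*y)) ≤ 1 := by
          rw [Real.exp_le_one_iff]; nlinarith
        have hgnn : ∀ i, 0 ≤ g i y := by
          intro i
          have := Real.exp_pos (-(c*y))
          have : (0:ℝ) ≤ 1 - Real.exp (-(c*y)) := by linarith
          positivity
        rw [← ENNReal.ofReal_sum_of_nonneg (fun i _ => hgnn i)]
        apply ENNReal.ofReal_le_ofReal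
        have hid : ∑ i ∈ Finset.range K, g i y = 1 - (1 - Real.exp (-(c*y))) ^ K := by
          simpa [hg] using geom_id (Real.exp (-(c*y))) K
        rw [hid]
        have := prod_bound K hK α hα hsum y hy0
        rw [hc] at *
        linarith [this]
end

section
/- Let K ≥ 1 be a natural number and let α : {1,…,K} → ℝ satisfy α_j ≥ 0 for all j and ∑_{j=1}^K α_j = 1. Then for every real y ≥ 0, ∏_{j=1}^K (1 − exp(−α_j·y)) ≤ (1 − exp(−y/K))^K; that is, among probability vectors, the product is maximized by the uniform vector. -/
/-- For a probability vector `α` on `K ≥ 1` types and every `y ≥ 0`,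
`∏_j (1 − exp(−α_j·y)) ≤ (1 − exp(−y/K))^K`: the product is maximized
by the uniform probability vector. -/
theorem stmt6 (K : ℕ) (hK : 1 ≤ K) (α : Fin K → ℝ)
    (hα : ∀ j, 0 ≤ α j) (hsum : ∑ j, α j = 1) (y : ℝ) (hy : 0 ≤ y) :
    ∏ j, (1 - Real.exp (-(α j) * y)) ≤ (1 - Real.exp (-y / K)) ^ K := by
  have hKpos : (0:ℝ) < K := by exact_mod_cast hK
  set z : Fin K → ℝ := fun j => 1 - Real.exp (-(α j) * y) with hz_def
  have hz : ∀ j, 0 ≤ z j := by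
    intro j
    have h0 := mul_nonneg (hα j) hy
    have : Real.exp (-(α j) * y) ≤ 1 := Real.exp_le_one_iff.mpr (by linarith)
    simp only [hz_def]
    linarith
  have hw : ∑ _j : Fin K, (K:ℝ)⁻¹ = 1 := by
    simp [Finset.sum_const]
    field_simp
  -- AM-GM
  have amgm := Real.geom_mean_le_arith_mean_weighted Finset.univ
    (fun _ => (K:ℝ)⁻¹) z (fun i _ => by positivity) hw (fun i _ => hz i)
  -- Jensen for exp
  have jensen := convexOn_exp.map_sum_le (t := Finset.univ)
    (w := fun _ : Fin K => (K:ℝ)⁻¹) (p := fun j => -(α j) * y)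
    (fun i _ => by positivity) hw (fun i _ => Set.mem_univ _)
  have hsum_pt : ∑ j : Fin K, (K:ℝ)⁻¹ • (-(α j) * y) = -y / K := by
    rw [← Finset.smul_sum]
    have : ∑ j : Fin K, -(α j) * y = -y := by
      simp only [neg_mul]
      rw [Finset.sum_neg_distrib, ← Finset.sum_mul, hsum, one_mul]
    rw [this]
    simp [smul_eq_mul]
    ring
  rw [hsum_pt] at jensen
  -- mean m
  set m : ℝ := ∑ j, (K:ℝ)⁻¹ * z j with hm_def
  have hm_le : m ≤ 1 - Real.exp (-y / K) := by
    have : m = 1 - ∑ j, (K:ℝ)⁻¹ * Real.exp (-(α j) * y) := by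
      rw [hm_def]
      simp only [hz_def, mul_sub]
      rw [Finset.sum_sub_distrib]
      simp only [mul_one]
      rw [hw]
    rw [this]
    simp only [smul_eq_mul] at jensen
    linarith [jensen]
  have hm_nonneg : 0 ≤ m := Finset.sum_nonneg fun j _ => mul_nonneg (by positivity) (hz j)
  -- combine
  have key : ∏ j, z j ≤ m ^ K := by
    have h1 : ∏ j, z j = (∏ j, z j ^ ((K:ℝ)⁻¹)) ^ K := by
      rw [← Finset.prod_pow]
      refine Finset.prod_congr rfl fun j _ => ?_
      rw [← Real.rpow_natCast (z j ^ ((K:ℝ)⁻¹)) K, ← Real.rpow_mul (hz j)]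
      rw [inv_mul_cancel₀ (ne_of_gt hKpos), Real.rpow_one]
    rw [h1]
    exact pow_le_pow_left₀ (Finset.prod_nonneg fun j _ => Real.rpow_nonneg (hz j) _) amgm K
  calc ∏ j, z j ≤ m ^ K := key
    _ ≤ (1 - Real.exp (-y / K)) ^ K := pow_le_pow_left₀ hm_nonneg hm_le K
end

section
/- Let Δ > 0 and ε ∈ (0,1). Then there exists a natural number N such that for every natural number n ≥ N and every real x ≥ 0, if x ≥ (Δ·n/8)·exp(−2·Δ·x), then x ≥ (1−ε)·log n/(2·Δ). (This is the final step of the instance-dependent lower bound in Theorem 1: the inequality R̃_n ≥ (Δn/8)·exp(−2ΔR̃_n) forces R̃_n ≥ (1−ε)·log n/(2Δ) for all large n, where 'large enough n' depends only on Δ and ε.) -/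
/-- For `Δ > 0` and `ε ∈ (0,1)` there exists `N` such that for all `n ≥ N` and all
`x ≥ 0`, the inequality `x ≥ (Δn/8)·exp(−2Δx)` forces `x ≥ (1−ε)·log n/(2Δ)`. -/
theorem stmt15 (Δ ε : ℝ) (hΔ : 0 < Δ) (hε : ε ∈ Set.Ioo (0:ℝ) 1) :
    ∃ N : ℕ, ∀ n : ℕ, N ≤ n → ∀ x : ℝ, 0 ≤ x →
      (Δ * n / 8) * Real.exp (-2 * Δ * x) ≤ x →
      (1 - ε) * Real.log n / (2 * Δ) ≤ x := by
  obtain ⟨hε0, hε1⟩ := hε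
  set C : ℝ := 4 * (1 - ε) / Δ ^ 2 with hC
  have hCpos : 0 < C := div_pos (by linarith) (by positivity)
  -- eventually C * log n ≤ n ^ ε
  have hlo := isLittleO_log_rpow_atTop hε0
  have hev : ∀ᶠ y : ℝ in Filter.atTop, C * Real.log y ≤ y ^ ε := by
    have := hlo.bound (c := 1 / C) (by positivity)
    filter_upwards [this, Filter.eventually_ge_atTop (1:ℝ)] with y hy hy1
    have hlog : 0 ≤ Real.log y := Real.log_nonneg hy1
    have hry : 0 ≤ y ^ ε := Real.rpow_nonneg (by linarith) ε
    rw [Real.norm_eq_abs, Real.norm_eq_abs, abs_of_nonneg hlog, abs_of_nonneg hry] at hy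
    calc C * Real.log y ≤ C * (1 / C * y ^ ε) := by
          exact mul_le_mul_of_nonneg_left hy hCpos.le
      _ = y ^ ε := by field_simp
  have hnat : ∀ᶠ n : ℕ in Filter.atTop,
      C * Real.log (n : ℝ) ≤ (n : ℝ) ^ ε :=
    (tendsto_natCast_atTop_atTop (R := ℝ)).eventually hev
  obtain ⟨N, hN⟩ := (hnat.and (Filter.eventually_ge_atTop 1)).exists_forall_of_atTop
  refine ⟨N, fun n hn x hx hineq => ?_⟩
  obtain ⟨hNlog, hn1⟩ := hN n hn
  have hnpos : (0:ℝ) < n := by exact_mod_cast hn1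
  have hlogn : 0 ≤ Real.log n := Real.log_natCast_nonneg n
  by_contra hcon
  push_neg at hcon
  set L : ℝ := (1 - ε) * Real.log n / (2 * Δ) with hL
  -- exp(-2Δ L) = n^(ε-1)
  have hexpL : Real.exp (-2 * Δ * L) = (n:ℝ) ^ (ε - 1) := by
    rw [Real.rpow_def_of_pos hnpos]
    congr 1
    rw [hL]
    field_simp
    ring
  have hmono : Real.exp (-2 * Δ * L) < Real.exp (-2 * Δ * x) := by
    apply Real.exp_lt_exp.mpr
    nlinarith
  have hkey : (Δ * n / 8) * ((n:ℝ) ^ (ε - 1)) < x := by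
    calc (Δ * n / 8) * ((n:ℝ) ^ (ε - 1)) = (Δ * n / 8) * Real.exp (-2 * Δ * L) := by
          rw [hexpL]
      _ < (Δ * n / 8) * Real.exp (-2 * Δ * x) := by
          apply mul_lt_mul_of_pos_left hmono (by positivity)
      _ ≤ x := hineq
  have hpow : (n:ℝ) * (n:ℝ) ^ (ε - 1) = (n:ℝ) ^ ε := by
    nth_rewrite 1 [← Real.rpow_one (n:ℝ)]
    rw [← Real.rpow_add hnpos]
    ring_nf
  have hfinal : L ≤ (Δ / 8) * (n:ℝ) ^ ε := by
    have : (Δ / 8) * (C * Real.log n) ≤ (Δ / 8) * (n:ℝ) ^ ε :=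
      mul_le_mul_of_nonneg_left hNlog (by positivity)
    calc L = (Δ / 8) * (C * Real.log n) := by
          rw [hL, hC]; field_simp; ring
      _ ≤ (Δ / 8) * (n:ℝ) ^ ε := this
  have : (Δ * n / 8) * ((n:ℝ) ^ (ε - 1)) = (Δ / 8) * (n:ℝ) ^ ε := by
    rw [← hpow]; ring
  linarith
end
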